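/- Let λ > 0, γ ≥ 0, L > 0, and define x(s) = x_min + λ·arsinh((s − s_min)/λ) + γ(λ/L)(s − s_min) and y(s) = y_min + λ(√(1 + ((s − s_min)/λ)²) − 1) + γ(λ/(2L))·(s − s_min)²/λ. Then these functions satisfy (dx/ds)(1 − 1/R(s)) = μ and (dy/ds)(1 − 1/R(s)) = (γ/L)(s − s_min), where R(s) = √((dx/ds)² + (dy/ds)²) and μ = γλ/L. -/

import Mathlib

theorem elastic_catenary_parametrization (lam gam L smin xmin ymin : ℝ)
    (hlam : 0 < lam) (hgam : 0 ≤ gam) (hL : 0 < L) :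
    ∀ s : ℝ,
      let x : ℝ → ℝ := fun s => xmin + lam * Real.arsinh ((s - smin) / lam) +
        gam * (lam / L) * (s - smin)
      let y : ℝ → ℝ := fun s => ymin +
        lam * (Real.sqrt (1 + ((s - smin) / lam) ^ 2) - 1) +
        gam * (lam / (2 * L)) * ((s - smin) ^ 2 / lam)
      let R : ℝ → ℝ := fun s => Real.sqrt ((deriv x s) ^ 2 + (deriv y s) ^ 2)
      deriv x s * (1 - 1 / R s) = gam * lam / L ∧
      deriv y s * (1 - 1 / R s) = (gam / L) * (s - smin) := by
  intro s x y R
  have hlam' : lam ≠ 0 := ne_of_gt hlam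
  have hL' : L ≠ 0 := ne_of_gt hL
  set u : ℝ := (s - smin) / lam with hu
  have hQpos : (0:ℝ) < 1 + u ^ 2 := by positivity
  have hsq : 0 < Real.sqrt (1 + u ^ 2) := Real.sqrt_pos.mpr hQpos
  set q : ℝ := Real.sqrt (1 + u ^ 2) with hq
  have hq2 : q ^ 2 = 1 + u ^ 2 := Real.sq_sqrt hQpos.le
  -- inner derivative
  have hinner : HasDerivAt (fun t : ℝ => (t - smin) / lam) (1 / lam) s := by
    simpa using ((hasDerivAt_id s).sub_const smin).div_const lam
  -- derivative of x
  have hx : HasDerivAt x (lam * (q⁻¹ * (1 / lam)) + gam * (lam / L) * 1) s := by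
    have h1 : HasDerivAt (fun t : ℝ => Real.arsinh ((t - smin) / lam))
        (q⁻¹ * (1 / lam)) s := by
      simpa [hu, hq, Function.comp_def] using (Real.hasDerivAt_arsinh u).comp s hinner
    have h2 : HasDerivAt (fun t : ℝ => gam * (lam / L) * (t - smin))
        (gam * (lam / L) * 1) s :=
      ((hasDerivAt_id s).sub_const smin).const_mul _
    exact ((h1.const_mul lam).const_add xmin).add h2
  -- derivative of y
  have hy : HasDerivAt y
      (lam * (1 / (2 * q) * (2 * u ^ 1 * (1 / lam))) +
        gam * (lam / (2 * L)) * (2 * (s - smin) ^ 1 * 1 / lam)) s := by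
    have hQ : HasDerivAt (fun t : ℝ => 1 + ((t - smin) / lam) ^ 2)
        (2 * u ^ 1 * (1 / lam)) s := by
      simpa [hu] using (hinner.pow 2).const_add 1
    have hroot : HasDerivAt (fun t : ℝ => Real.sqrt (1 + ((t - smin) / lam) ^ 2))
        (1 / (2 * q) * (2 * u ^ 1 * (1 / lam))) s := by
      have := (Real.hasDerivAt_sqrt hQpos.ne').comp s hQ
      simpa [hu, hq, Function.comp_def] using this
    have h2 : HasDerivAt (fun t : ℝ => gam * (lam / (2 * L)) * ((t - smin) ^ 2 / lam))
        (gam * (lam / (2 * L)) * (2 * (s - smin) ^ 1 * 1 / lam)) s := by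
      have : HasDerivAt (fun t : ℝ => (t - smin) ^ 2 / lam)
          (2 * (s - smin) ^ 1 * 1 / lam) s := by
        simpa using (((hasDerivAt_id s).sub_const smin).pow 2).div_const lam
      exact this.const_mul _
    exact (((hroot.sub_const 1).const_mul lam).const_add ymin).add h2
  have hdx : deriv x s = q⁻¹ + gam * lam / L := by
    rw [hx.deriv]; field_simp
  have hdy : deriv y s = u * q⁻¹ + gam * lam / L * u := by
    rw [hy.deriv]
    rw [hu]
    field_simp
  -- key quantities
  set μ : ℝ := gam * lam / L with hmu
  have hμ : 0 ≤ μ := by positivity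
  have hXpos : 0 < q⁻¹ + μ := by positivity
  have hcq : q⁻¹ * q = 1 := inv_mul_cancel₀ hsq.ne'
  -- R = (q⁻¹ + μ) * q
  have hR : R s = (q⁻¹ + μ) * q := by
    show Real.sqrt _ = _
    rw [hdx, hdy]
    have h1 : (q⁻¹ + μ) ^ 2 + (u * q⁻¹ + μ * u) ^ 2 = ((q⁻¹ + μ) * q) ^ 2 := by
      have : (u * q⁻¹ + μ * u) ^ 2 = u ^ 2 * (q⁻¹ + μ) ^ 2 := by ring
      rw [this]
      have : ((q⁻¹ + μ) * q) ^ 2 = (q⁻¹ + μ) ^ 2 * q ^ 2 := by ring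
      rw [this, hq2]; ring
    rw [h1]
    exact Real.sqrt_sq (by positivity)
  have hRpos : 0 < R s := by rw [hR]; positivity
  have hinvR : 1 / R s = q⁻¹ / (q⁻¹ + μ) := by
    rw [hR]
    field_simp
  have hXne : q⁻¹ + μ ≠ 0 := hXpos.ne'
  have hμu : (gam / L) * (s - smin) = μ * u := by
    rw [hmu, hu]; field_simp
  constructor
  · rw [hdx, hinvR]
    field_simp
    ring
  · rw [hdy, hinvR, hμu]
    field_simp
    ring
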